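/- arXiv:1909.10388 — 2 statements merged into one kernel-verified Lean document; each statement's English description precedes it below -/
import Mathlib

section
/- Let M be a Riemannian manifold (viewed as a metric space with its Riemannian distance) on which a group G acts by isometries such that the quotient M/G is compact (cocompact action). Then M is a complete metric space. -/
/-! Statement 0: A (connected, locally compact) Riemannian manifold, viewed as a length
metric space, admitting an isometric cocompact group action is complete.  We model the
Riemannian manifold by its metric: a connected, locally compact length metric space. -/

open Set
open Pointwise

/-- The distance is an intrinsic (length) metric: the distance between two points is the
infimum of the lengths (total variations) of continuous paths joining them. -/
def IsLengthMetric (M : Type*) [MetricSpace M] : Prop :=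
  ∀ x y : M, ENNReal.ofReal (dist x y) = ⨅ γ : Path x y, eVariationOn γ Set.univ

theorem complete_of_isometric_cocompact_action
    (M : Type*) [MetricSpace M] [LocallyCompactSpace M] [ConnectedSpace M]
    (hlen : IsLengthMetric M)
    (G : Type*) [Group G] [MulAction G M] [IsIsometricSMul G M]
    [CompactSpace (Quotient (MulAction.orbitRel G M))] :
    CompleteSpace M := by
  classical
  -- the quotient map is open
  set π : M → Quotient (MulAction.orbitRel G M) := Quotient.mk _ with hπ
  have hopen : IsOpenMap π := by
    intro U hU
    rw [isOpen_coinduced (f := π)]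
    have : π ⁻¹' (π '' U) = ⋃ g : G, g • U := by
      ext x
      simp only [mem_preimage, mem_image, mem_iUnion]
      constructor
      · rintro ⟨y, hy, hxy⟩
        obtain ⟨g, hg⟩ := Quotient.exact hxy.symm
        exact ⟨g, y, hy, hg⟩
      · rintro ⟨g, y, hy, rfl⟩
        exact ⟨y, hy, Quotient.sound ⟨g⁻¹, inv_smul_smul g y⟩⟩
    rw [this]
    exact isOpen_iUnion fun g => hU.smul g
  -- choose radii of compact closed balls
  have hr : ∀ x : M, ∃ r, 0 < r ∧ IsCompact (Metric.closedBall x r) := fun x =>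
    Metric.exists_isCompact_closedBall x
  choose r hr0 hrc using hr
  -- cover the compact quotient by images of half-balls
  have hcover : univ ⊆ ⋃ x : M, π '' (Metric.ball x (r x / 2)) := by
    rintro q -
    obtain ⟨x, rfl⟩ := Quotient.exists_rep q
    exact mem_iUnion.2 ⟨x, ⟨x, Metric.mem_ball_self (by linarith [hr0 x]), rfl⟩⟩
  obtain ⟨t, ht⟩ := isCompact_univ.elim_finite_subcover
    (fun x : M => π '' (Metric.ball x (r x / 2)))
    (fun x => hopen _ Metric.isOpen_ball) hcover
  -- every point is moved into some half-ball by the action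
  have hKorbit : ∀ y : M, ∃ g : G, ∃ x ∈ t, g • y ∈ Metric.closedBall x (r x / 2) := by
    intro y
    have : π y ∈ ⋃ x ∈ t, π '' (Metric.ball x (r x / 2)) := ht (mem_univ _)
    simp only [mem_iUnion, mem_image] at this
    obtain ⟨x, hx, z, hz, hzy⟩ := this
    obtain ⟨g, hg⟩ := Quotient.exact hzy
    exact ⟨g, x, hx, by rw [show g • y = z from hg]; exact Metric.ball_subset_closedBall hz⟩
  -- a uniform positive radius
  set ε : ℝ := (insert (1 : ℝ) (t.image r)).min' (by simp) with hε
  have hε0 : 0 < ε := by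
    rw [Finset.lt_min'_iff]; intro y hy
    simp only [Finset.mem_insert, Finset.mem_image] at hy
    rcases hy with rfl | ⟨x, _, rfl⟩
    · norm_num
    · exact hr0 x
  have hεle : ∀ x ∈ t, ε ≤ r x := fun x hx =>
    Finset.min'_le _ _ (by
      simp only [Finset.mem_insert, Finset.mem_image]; exact Or.inr ⟨x, hx, rfl⟩)
  -- completeness via Cauchy sequences
  apply Metric.complete_of_cauchySeq_tendsto
  intro u hu
  obtain ⟨N, hN⟩ := Metric.cauchySeq_iff'.1 hu (ε / 2) (by positivity)
  obtain ⟨g, x, hx, hgx⟩ := hKorbit (u N)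
  -- shifted, translated sequence inside the compact ball
  set v : ℕ → M := fun n => g • u (n + N) with hv
  have hvc : CauchySeq v := by
    have : CauchySeq (fun n => u (n + N)) := hu.comp_tendsto (Filter.tendsto_add_atTop_nat N)
    exact (isometry_smul M g).uniformContinuous.comp_cauchySeq this
  have hvmem : ∀ n, v n ∈ Metric.closedBall x (r x) := by
    intro n
    have h1 : dist (u (n + N)) (u N) < ε / 2 := hN _ (Nat.le_add_left _ _)
    have h2 : dist (v n) (g • u N) < ε / 2 := by
      simpa [hv, dist_smul] using h1
    have h3 := Metric.mem_closedBall.1 hgx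
    have := hεle x hx
    simp only [Metric.mem_closedBall]
    calc dist (v n) x ≤ dist (v n) (g • u N) + dist (g • u N) x := dist_triangle _ _ _
      _ ≤ ε / 2 + r x / 2 := add_le_add h2.le h3
      _ ≤ r x := by linarith
  obtain ⟨a, -, ha⟩ := cauchySeq_tendsto_of_isComplete (hrc x).isComplete hvmem hvc
  refine ⟨g⁻¹ • a, ?_⟩
  have h4 : Filter.Tendsto (fun n => u (n + N)) Filter.atTop (nhds (g⁻¹ • a)) := by
    have h5 := ha.const_smul g⁻¹
    simpa [hv, inv_smul_smul] using h5
  exact (Filter.tendsto_add_atTop_iff_nat N).1 h4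
end

section
/- Let a discrete group G act properly, cocompactly and by isometries on a proper metric space M. Let p ∈ M, let N be the fixed point set of the stabilizer G_p, and let H be the normalizer of G_p in G. Then the action of H on N is cocompact, i.e. N/H is compact. -/
/-! Statement 5 (Lemma 4.1): if a discrete group `G` acts properly (metrically
properly), cocompactly and by isometries on a proper metric space `M`, `p ∈ M`,
`N = Fix(G_p)` and `H = N_G(G_p)`, then the action of `H` on `N` is cocompact:
there is a compact `K ⊆ N` whose `H`-translates cover `N`. -/

theorem normalizer_acts_cocompactly_on_fixed_set
    (M : Type*) [MetricSpace M] [ProperSpace M]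
    (G : Type*) [Group G] [MulAction G M] [IsIsometricSMul G M]
    (hproper : ∀ (x : M) (R : ℝ), {g : G | dist (g • x) x ≤ R}.Finite)
    [CompactSpace (Quotient (MulAction.orbitRel G M))]
    (p : M) :
    ∃ K : Set M, IsCompact K ∧
      K ⊆ {x : M | ∀ g ∈ MulAction.stabilizer G p, g • x = x} ∧
      ∀ x ∈ {x : M | ∀ g ∈ MulAction.stabilizer G p, g • x = x},
        ∃ h ∈ Subgroup.normalizer (MulAction.stabilizer G p : Set G), h • x ∈ K := by
  classical
  set N : Set M := {x : M | ∀ g ∈ MulAction.stabilizer G p, g • x = x} with hN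
  -- Step 1: cocompactness gives a radius `R` so every orbit meets `closedBall p R`.
  obtain ⟨R, hR0, hRcover⟩ :
      ∃ R : ℝ, 0 ≤ R ∧ ∀ x : M, ∃ g : G, dist (g • x) p ≤ R := by
    letI : Setoid M := MulAction.orbitRel G M
    set U : ℕ → Set M := fun n => {x : M | ∃ g : G, dist (g • x) p < n} with hU
    have hUopen : ∀ n, IsOpen (U n) := by
      intro n
      have : U n = ⋃ g : G, (fun x : M => g • x) ⁻¹' Metric.ball p n := by
        ext x
        simp only [hU, Set.mem_iUnion, Set.mem_preimage, Metric.mem_ball, Set.mem_setOf_eq]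
      rw [this]
      exact isOpen_iUnion fun g =>
        (Metric.isOpen_ball).preimage (continuous_const_smul g)
    have hsat : ∀ n,
        (Quotient.mk' : M → Quotient (MulAction.orbitRel G M)) ⁻¹'
          (Quotient.mk' '' U n) = U n := by
      intro n
      apply Set.Subset.antisymm
      · rintro x ⟨y, hy, hxy⟩
        obtain ⟨g, hg⟩ := hy
        have horb : y ∈ MulAction.orbit G x :=
          MulAction.orbitRel_apply.mp (Quotient.exact' hxy)
        obtain ⟨g', hg'⟩ := horb
        replace hg' : g' • x = y := hg'
        refine ⟨g * g', ?_⟩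
        rwa [mul_smul, hg']
      · intro x hx
        exact ⟨x, hx, rfl⟩
    have hVopen : ∀ n, IsOpen ((Quotient.mk' : M → Quotient (MulAction.orbitRel G M)) '' U n) := by
      intro n
      have h1 : IsOpen ((Quotient.mk' : M → Quotient (MulAction.orbitRel G M)) ⁻¹'
          (Quotient.mk' '' U n)) := by rw [hsat n]; exact hUopen n
      exact isQuotientMap_quotient_mk'.isOpen_preimage.mp h1
    have hcover : (Set.univ : Set (Quotient (MulAction.orbitRel G M))) ⊆
        ⋃ n : ℕ, (Quotient.mk' : M → Quotient (MulAction.orbitRel G M)) '' U n := by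
      intro z _
      obtain ⟨x, rfl⟩ := Quotient.exists_rep z
      obtain ⟨n, hn⟩ := exists_nat_gt (dist ((1 : G) • x) p)
      exact Set.mem_iUnion.2 ⟨n, ⟨x, ⟨1, hn⟩, rfl⟩⟩
    obtain ⟨t, ht⟩ := isCompact_univ.elim_finite_subcover _ hVopen hcover
    refine ⟨(t.sup id : ℕ), Nat.cast_nonneg _, fun x => ?_⟩
    have hx := ht (Set.mem_univ (Quotient.mk' x))
    obtain ⟨n, hn, hmem⟩ := Set.mem_iUnion₂.1 hx
    have hxU : x ∈ U n := by rw [← hsat n]; exact hmem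
    obtain ⟨g, hg⟩ := hxU
    refine ⟨g, hg.le.trans ?_⟩
    exact_mod_cast Nat.cast_le.2 (Finset.le_sup (f := id) hn)
  -- Step 2: finiteness of the relevant conjugates of the stabilizer.
  set F : Set G := {t : G | dist (t • p) p ≤ 2 * R} with hF
  have hFfin : F.Finite := hproper p (2 * R)
  set conjSet : G → Set G :=
    fun g => (fun t => g * t * g⁻¹) '' (MulAction.stabilizer G p : Set G) with hconj
  set A : Set G := {g : G | ∃ x ∈ N, dist (g • x) p ≤ R} with hA
  have hAF : ∀ g ∈ A, conjSet g ⊆ F := by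
    rintro g ⟨x, hxN, hxR⟩ u ⟨t, ht, rfl⟩
    have htx : t • x = x := hxN t ht
    have h1 : (g * t * g⁻¹) • (g • x) = g • x := by
      rw [← mul_smul]
      have h2 : g * t * g⁻¹ * g = g * t := by group
      rw [h2, mul_smul, htx]
    show dist ((g * t * g⁻¹) • p) p ≤ 2 * R
    calc dist ((g * t * g⁻¹) • p) p
        ≤ dist ((g * t * g⁻¹) • p) ((g * t * g⁻¹) • (g • x))
            + dist ((g * t * g⁻¹) • (g • x)) p := dist_triangle _ _ _
      _ = dist p (g • x) + dist (g • x) p := by rw [dist_smul, h1]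
      _ ≤ R + R := by
          rw [dist_comm p (g • x)]
          exact add_le_add hxR hxR
      _ = 2 * R := by ring
  have hTfin : (conjSet '' A).Finite := by
    apply hFfin.finite_subsets.subset
    rintro S ⟨g, hg, rfl⟩
    exact hAF g hg
  -- representatives of the conjugates
  set rep : Set G → G := fun S => if h : S ∈ conjSet '' A then h.choose else 1 with hrep
  have hrepA : ∀ S ∈ conjSet '' A, rep S ∈ A ∧ conjSet (rep S) = S := by
    intro S hS
    rw [hrep]
    simp only [dif_pos hS]
    exact hS.choose_spec
  set B : Set G := rep '' (conjSet '' A) with hB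
  have hBfin : B.Finite := hTfin.image rep
  -- the compact set
  refine ⟨N ∩ ⋃ b ∈ B, Metric.closedBall ((b⁻¹ : G) • p) R, ?_, Set.inter_subset_left, ?_⟩
  · have hNclosed : IsClosed N := by
      have : N = ⋂ g ∈ MulAction.stabilizer G p, {x : M | g • x = x} := by
        ext x; simp [hN]
      rw [this]
      exact isClosed_biInter fun g _ =>
        isClosed_eq (continuous_const_smul g) continuous_id
    exact IsCompact.inter_left
      (hBfin.isCompact_biUnion fun b _ => isCompact_closedBall _ _) hNclosed
  · intro x hxN
    obtain ⟨g, hgR⟩ := hRcover x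
    have hgA : g ∈ A := ⟨x, hxN, hgR⟩
    obtain ⟨hbA, hbconj⟩ := hrepA (conjSet g) ⟨g, hgA, rfl⟩
    set b : G := rep (conjSet g) with hb
    -- h = b⁻¹ * g is in the normalizer
    have hnorm : b⁻¹ * g ∈ Subgroup.normalizer (MulAction.stabilizer G p : Set G) := by
      rw [Subgroup.mem_normalizer_iff]
      intro t
      constructor
      · intro ht
        have hmem : g * t * g⁻¹ ∈ conjSet b := by
          rw [hbconj]; exact ⟨t, ht, rfl⟩
        obtain ⟨s, hs, hseq⟩ := hmem
        replace hseq : b * s * b⁻¹ = g * t * g⁻¹ := hseq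
        have key : (b⁻¹ * g) * t * (b⁻¹ * g)⁻¹ = s := by
          have h3 : (b⁻¹ * g) * t * (b⁻¹ * g)⁻¹ = b⁻¹ * (g * t * g⁻¹) * b := by group
          rw [h3, ← hseq]
          group
        rw [key]
        exact hs
      · intro ht
        have hsmem : (b⁻¹ * g) * t * (b⁻¹ * g)⁻¹ ∈ MulAction.stabilizer G p := ht
        have hmem : b * ((b⁻¹ * g) * t * (b⁻¹ * g)⁻¹) * b⁻¹ ∈ conjSet g := by
          rw [← hbconj]; exact ⟨_, hsmem, rfl⟩
        obtain ⟨u, hu, hueq⟩ := hmem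
        replace hueq : g * u * g⁻¹ = b * ((b⁻¹ * g) * t * (b⁻¹ * g)⁻¹) * b⁻¹ := hueq
        have hbs : b * ((b⁻¹ * g) * t * (b⁻¹ * g)⁻¹) * b⁻¹ = g * t * g⁻¹ := by group
        have hut : u = t := by
          have h4 : g * u * g⁻¹ = g * t * g⁻¹ := hueq.trans hbs
          have h5 : g⁻¹ * (g * u * g⁻¹) * g = g⁻¹ * (g * t * g⁻¹) * g := by rw [h4]
          simpa [mul_assoc] using h5
        rw [← hut]
        exact hu
    refine ⟨b⁻¹ * g, hnorm, Set.mem_inter ?_ ?_⟩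
    · -- (b⁻¹*g) • x ∈ N
      intro s hs
      have hinv : (b⁻¹ * g)⁻¹ * s * (b⁻¹ * g) ∈ MulAction.stabilizer G p := by
        rw [Subgroup.mem_normalizer_iff''] at hnorm
        exact (hnorm s).1 hs
      have hfix : ((b⁻¹ * g)⁻¹ * s * (b⁻¹ * g)) • x = x := hxN _ hinv
      calc s • (b⁻¹ * g) • x
          = ((b⁻¹ * g) * ((b⁻¹ * g)⁻¹ * s * (b⁻¹ * g))) • x := by
            rw [← mul_smul]; congr 1; group
        _ = (b⁻¹ * g) • x := by rw [mul_smul, hfix]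
    · -- in the ball around b⁻¹ • p
      have hbB : b ∈ B := Set.mem_image_of_mem rep (Set.mem_image_of_mem conjSet hgA)
      apply Set.mem_biUnion hbB
      rw [Metric.mem_closedBall]
      have hdist : dist ((b⁻¹ * g) • x) (b⁻¹ • p) = dist (g • x) p := by
        rw [← dist_smul b, ← mul_smul, ← mul_smul]
        simp
      rw [hdist]
      exact hgR
end
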